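/- arXiv:2511.07646 — 2 statements merged into one kernel-verified Lean document; each statement's English description precedes it below -/
import Mathlib

section
/- Under the normalized gradient update Ξ_{k+1} = Ξ_k − γ (Ξ_k η_k η_kᵀ)/N_k with N_k = max{φ, ‖η_k‖²}, φ > 0, and 0 < γ < 2, the sum Σ_{k=0}^∞ ‖Ξ_k η_k‖²/N_k is finite and bounded by ‖Ξ_0‖_F² / (γ(2−γ)). -/
/-! Expanding the square row by row, one step changes `‖Ξ‖_F²` by
`-2c‖Ξη‖² + c²‖Ξη‖²‖η‖²` with `c = γ / N`; since `‖η‖² ≤ N` this is at most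
`-γ(2-γ)‖Ξη‖²/N`. Summing these decrements telescopes, and `‖Ξ‖_F² ≥ 0` bounds every
partial sum by `‖Ξ₀‖_F² / (γ(2-γ))`. -/

open Matrix

/-- Squared Frobenius norm. -/
def frobSq {p q : ℕ} (M : Matrix (Fin p) (Fin q) ℝ) : ℝ := ∑ i, ∑ j, (M i j) ^ 2

theorem frobSq_eq_sum_dotProduct {p q : ℕ} (M : Matrix (Fin p) (Fin q) ℝ) :
    frobSq M = ∑ i, M i ⬝ᵥ M i := by
  simp only [frobSq, dotProduct, sq]

theorem frobSq_nonneg {p q : ℕ} (M : Matrix (Fin p) (Fin q) ℝ) : 0 ≤ frobSq M := by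
  rw [frobSq_eq_sum_dotProduct]
  exact Finset.sum_nonneg fun i _ => dotProduct_self_star_nonneg (M i)

theorem dotProduct_self_sub_smul {n : Type*} [Fintype n] (x v : n → ℝ) (t : ℝ) :
    (x - t • v) ⬝ᵥ (x - t • v) = x ⬝ᵥ x - 2 * t * (x ⬝ᵥ v) + t ^ 2 * (v ⬝ᵥ v) := by
  simp only [sub_dotProduct, dotProduct_sub, smul_dotProduct, dotProduct_smul, smul_eq_mul,
    dotProduct_comm v x]
  ring

theorem frobSq_sub_smul_vecMulVec {p q : ℕ} (M : Matrix (Fin p) (Fin q) ℝ) (v : Fin q → ℝ)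
    (c : ℝ) :
    frobSq (M - c • vecMulVec (M *ᵥ v) v) =
      frobSq M - 2 * c * ((M *ᵥ v) ⬝ᵥ (M *ᵥ v)) + c ^ 2 * ((M *ᵥ v) ⬝ᵥ (M *ᵥ v)) * (v ⬝ᵥ v) := by
  have hrow : ∀ i, (M - c • vecMulVec (M *ᵥ v) v) i = M i - (c * (M *ᵥ v) i) • v := by
    intro i; ext j
    simp [vecMulVec_apply, mul_assoc]
  have hdot : ∀ i, M i ⬝ᵥ v = (M *ᵥ v) i := fun i => rfl
  rw [frobSq_eq_sum_dotProduct, frobSq_eq_sum_dotProduct]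
  simp only [hrow, dotProduct_self_sub_smul, hdot, Finset.sum_add_distrib, Finset.sum_sub_distrib]
  rw [dotProduct.eq_1 (M *ᵥ v), Finset.mul_sum, Finset.mul_sum, Finset.sum_mul]
  congr 1
  · congr 1
    exact Finset.sum_congr rfl fun _ _ => by ring
  · exact Finset.sum_congr rfl fun _ _ => by ring

theorem frobSq_sub_smul_vecMulVec_le {p q : ℕ} (M : Matrix (Fin p) (Fin q) ℝ) (v : Fin q → ℝ)
    (γ : ℝ) {N : ℝ} (hN : 0 < N) (hvN : v ⬝ᵥ v ≤ N) :
    frobSq (M - (γ / N) • vecMulVec (M *ᵥ v) v) ≤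
      frobSq M - γ * (2 - γ) * ((M *ᵥ v) ⬝ᵥ (M *ᵥ v) / N) := by
  set E := (M *ᵥ v) ⬝ᵥ (M *ᵥ v)
  have hE : 0 ≤ E := dotProduct_self_star_nonneg _
  have hquad : (γ / N) ^ 2 * E * (v ⬝ᵥ v) ≤ (γ / N) ^ 2 * E * N :=
    mul_le_mul_of_nonneg_left hvN (by positivity)
  have hexact : 2 * (γ / N) * E - (γ / N) ^ 2 * E * N = γ * (2 - γ) * (E / N) := by
    field_simp
  rw [frobSq_sub_smul_vecMulVec]
  linarith

theorem sum_range_le_div_of_mul_le_sub {a V : ℕ → ℝ} {c : ℝ} (hc : 0 < c)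
    (hV : ∀ k, 0 ≤ V k) (hdec : ∀ k, c * a k ≤ V k - V (k + 1)) (n : ℕ) :
    ∑ k ∈ Finset.range n, a k ≤ V 0 / c := by
  rw [le_div_iff₀' hc, Finset.mul_sum]
  calc ∑ k ∈ Finset.range n, c * a k
      ≤ ∑ k ∈ Finset.range n, (V k - V (k + 1)) := Finset.sum_le_sum fun k _ => hdec k
    _ = V 0 - V n := Finset.sum_range_sub' V n
    _ ≤ V 0 := sub_le_self _ (hV n)

theorem summable_and_tsum_le_of_mul_le_sub {a V : ℕ → ℝ} {c : ℝ} (hc : 0 < c)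
    (ha : ∀ k, 0 ≤ a k) (hV : ∀ k, 0 ≤ V k) (hdec : ∀ k, c * a k ≤ V k - V (k + 1)) :
    Summable a ∧ ∑' k, a k ≤ V 0 / c := by
  have hsum := sum_range_le_div_of_mul_le_sub hc hV hdec
  have hS : Summable a := summable_of_sum_range_le ha hsum
  exact ⟨hS, hS.tsum_le_of_sum_range_le hsum⟩

theorem stmt_12 (p q : ℕ)
    (Ξ : ℕ → Matrix (Fin p) (Fin q) ℝ) (η : ℕ → (Fin q → ℝ)) (Nk : ℕ → ℝ)
    (φ γ : ℝ) (hφ : 0 < φ) (hγ₀ : 0 < γ) (hγ₂ : γ < 2)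
    (hN : ∀ k, Nk k = max φ (η k ⬝ᵥ η k))
    (hupd : ∀ k, Ξ (k + 1) = Ξ k - (γ / Nk k) • Matrix.vecMulVec (Ξ k *ᵥ η k) (η k)) :
    Summable (fun k => ((Ξ k *ᵥ η k) ⬝ᵥ (Ξ k *ᵥ η k)) / Nk k) ∧
    (∑' k, ((Ξ k *ᵥ η k) ⬝ᵥ (Ξ k *ᵥ η k)) / Nk k) ≤ frobSq (Ξ 0) / (γ * (2 - γ)) := by
  have hNpos : ∀ k, 0 < Nk k := fun k => hN k ▸ lt_max_of_lt_left hφ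
  have hηN : ∀ k, η k ⬝ᵥ η k ≤ Nk k := fun k => hN k ▸ le_max_right _ _
  refine summable_and_tsum_le_of_mul_le_sub (V := fun k => frobSq (Ξ k))
    (mul_pos hγ₀ (by linarith)) (fun k => div_nonneg (dotProduct_self_star_nonneg _) (hNpos k).le)
    (fun k => frobSq_nonneg _) fun k => ?_
  have hdec := frobSq_sub_smul_vecMulVec_le (Ξ k) (η k) γ (hNpos k) (hηN k)
  rw [← hupd k] at hdec
  linarith
end

section
/- If additionally the regressors are uniformly bounded, sup_k ‖η_k‖ ≤ B < ∞, then under the normalized update with 0 < γ < 2 and φ > 0, the prediction error ε_{k+1} = Ξ_k η_k converges to zero: lim_{k→∞} ‖Ξ_k η_k‖ = 0. -/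
/-!
The squared Frobenius norm `V_k = ‖Ξ_k‖²` is a Lyapunov function: one normalized step lowers it
by `(γ / N_k) (2 - γ ‖η_k‖² / N_k) ‖ε_{k+1}‖² ≥ γ (2 - γ) ‖ε_{k+1}‖² / N_k`. Telescoping makes
`∑ ‖ε_{k+1}‖² / N_k` summable, and since `N_k ≤ max φ B²` the errors themselves tend to zero.
-/

open Matrix Filter

theorem Matrix.sum_dotProduct_sub_vecMulVec {m n R : Type*} [Fintype m] [Fintype n] [CommRing R]
    (A : Matrix m n R) (u : m → R) (v : n → R) :
    ∑ i, (A - vecMulVec u v) i ⬝ᵥ (A - vecMulVec u v) i =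
      ∑ i, A i ⬝ᵥ A i - 2 * (u ⬝ᵥ (A *ᵥ v)) + (u ⬝ᵥ u) * (v ⬝ᵥ v) := by
  have hrow : ∀ i, (A - vecMulVec u v) i = A i - u i • v := fun i => by
    ext j; simp [vecMulVec_apply]
  have hrow_sq : ∀ i, (A i - u i • v) ⬝ᵥ (A i - u i • v) =
      A i ⬝ᵥ A i - 2 * (u i * (A *ᵥ v) i) + u i * u i * (v ⬝ᵥ v) := fun i => by
    simp only [sub_dotProduct, dotProduct_sub, smul_dotProduct, dotProduct_smul, smul_eq_mul,
      dotProduct_comm v (A i), mulVec]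
    ring
  simp only [hrow, hrow_sq]
  rw [Finset.sum_add_distrib, Finset.sum_sub_distrib, ← Finset.mul_sum, ← Finset.sum_mul]
  rfl

theorem sum_dotProduct_normalized_step_decrease {m n : Type*} [Fintype m] [Fintype n]
    (A : Matrix m n ℝ) (η : n → ℝ) {γ N : ℝ} (hγ : 0 ≤ γ) (hN : 0 < N) (hηN : η ⬝ᵥ η ≤ N) :
    γ * (2 - γ) * ((A *ᵥ η) ⬝ᵥ (A *ᵥ η) / N) ≤
      ∑ i, A i ⬝ᵥ A i - ∑ i, (A - (γ / N) • vecMulVec (A *ᵥ η) η) i ⬝ᵥ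
        (A - (γ / N) • vecMulVec (A *ᵥ η) η) i := by
  set e := (A *ᵥ η) ⬝ᵥ (A *ᵥ η)
  have he : 0 ≤ e := dotProduct_self_star_nonneg _
  rw [← smul_vecMulVec, sum_dotProduct_sub_vecMulVec]
  simp only [smul_dotProduct, dotProduct_smul, smul_eq_mul]
  have hγη : γ * (η ⬝ᵥ η) / N ≤ γ := by
    rw [div_le_iff₀ hN]; exact mul_le_mul_of_nonneg_left hηN hγ
  have hdecrease : γ / N * e * (2 - γ) ≤ γ / N * e * (2 - γ * (η ⬝ᵥ η) / N) :=
    mul_le_mul_of_nonneg_left (by linarith) (by positivity)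
  calc γ * (2 - γ) * (e / N) = γ / N * e * (2 - γ) := by ring
    _ ≤ γ / N * e * (2 - γ * (η ⬝ᵥ η) / N) := hdecrease
    _ = _ := by ring

theorem summable_of_le_sub_succ {f V : ℕ → ℝ} (hf : ∀ k, 0 ≤ f k) (hV : ∀ k, 0 ≤ V k)
    (h : ∀ k, f k ≤ V k - V (k + 1)) : Summable f := by
  refine summable_of_sum_range_le (c := V 0) hf fun n => ?_
  calc ∑ k ∈ Finset.range n, f k ≤ ∑ k ∈ Finset.range n, (V k - V (k + 1)) :=
        Finset.sum_le_sum fun k _ => h k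
    _ = V 0 - V n := Finset.sum_range_sub' V n
    _ ≤ V 0 := sub_le_self _ (hV n)

theorem tendsto_zero_of_div_tendsto_zero {e N : ℕ → ℝ} {M : ℝ} (he : ∀ k, 0 ≤ e k)
    (hN : ∀ k, 0 < N k) (hNM : ∀ k, N k ≤ M) (h : Tendsto (fun k => e k / N k) atTop (nhds 0)) :
    Tendsto e atTop (nhds 0) := by
  have hbound : ∀ k, e k ≤ M * (e k / N k) := fun k => by
    rw [mul_div_assoc', le_div_iff₀ (hN k)]
    exact (mul_comm M (e k)).symm ▸ mul_le_mul_of_nonneg_left (hNM k) (he k)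
  simpa using squeeze_zero he hbound (by simpa using h.const_mul M)

theorem stmt_13 (p q : ℕ)
    (Ξ : ℕ → Matrix (Fin p) (Fin q) ℝ) (η : ℕ → (Fin q → ℝ)) (Nk : ℕ → ℝ)
    (φ γ B : ℝ) (hφ : 0 < φ) (hγ₀ : 0 < γ) (hγ₂ : γ < 2)
    (hN : ∀ k, Nk k = max φ (η k ⬝ᵥ η k))
    (hupd : ∀ k, Ξ (k + 1) = Ξ k - (γ / Nk k) • Matrix.vecMulVec (Ξ k *ᵥ η k) (η k))
    (hB : ∀ k, Real.sqrt (η k ⬝ᵥ η k) ≤ B) :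
    Tendsto (fun k => Real.sqrt ((Ξ k *ᵥ η k) ⬝ᵥ (Ξ k *ᵥ η k))) atTop (nhds 0) := by
  set e : ℕ → ℝ := fun k => (Ξ k *ᵥ η k) ⬝ᵥ (Ξ k *ᵥ η k)
  have he : ∀ k, 0 ≤ e k := fun k => dotProduct_self_star_nonneg _
  have hNpos : ∀ k, 0 < Nk k := fun k => (hN k).symm ▸ lt_max_of_lt_left hφ
  have hNbound : ∀ k, Nk k ≤ max φ (B ^ 2) := fun k =>
    (hN k).symm ▸ max_le_max le_rfl (Real.sqrt_le_iff.mp (hB k)).2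
  have hstep : ∀ k, γ * (2 - γ) * (e k / Nk k) ≤
      ∑ i, Ξ k i ⬝ᵥ Ξ k i - ∑ i, Ξ (k + 1) i ⬝ᵥ Ξ (k + 1) i := fun k => by
    rw [hupd k]
    exact sum_dotProduct_normalized_step_decrease _ _ hγ₀.le (hNpos k)
      ((hN k).symm ▸ le_max_right _ _)
  have hc : 0 < γ * (2 - γ) := mul_pos hγ₀ (sub_pos.2 hγ₂)
  have hsummable : Summable fun k => γ * (2 - γ) * (e k / Nk k) :=
    summable_of_le_sub_succ (fun k => mul_nonneg hc.le (div_nonneg (he k) (hNpos k).le))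
      (fun k => Finset.sum_nonneg fun i _ => dotProduct_self_star_nonneg _) hstep
  have hratio : Tendsto (fun k => e k / Nk k) atTop (nhds 0) := by
    have := hsummable.tendsto_atTop_zero.const_mul (γ * (2 - γ))⁻¹
    rw [mul_zero] at this
    exact this.congr fun k => by rw [← mul_assoc, inv_mul_cancel₀ hc.ne', one_mul]
  simpa using (tendsto_zero_of_div_tendsto_zero he hNpos hNbound hratio).sqrt
end
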